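/- arXiv:2504.10914 — 2 statements merged into one kernel-verified Lean document; each statement's English description precedes it below -/
import Mathlib

section
/- In the stationary limit of the model r_t = ε_t + β ∑_{k=1}^{t-1} (1-λ)^{t-1-k} ξ_k with EMA signal s_t = γ ∑_{k=1}^{t-1} (1-η)^{t-1-k} r_k, the covariance ⟨s_t, r_t⟩ converges as t → ∞ to γ β₀² (1-λ)/(1 − (1-η)(1-λ)), where β₀² = β²/(λ(2-λ)). -/
open Filter

/-- Stationary limit of the signal–return covariance in Grebenkov's model.
With return covariances `C j k = δ_{jk} + β₀²((1-λ)^{|j-k|} − (1-λ)^{j+k-2})`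
and the EMA signal `s_t = γ ∑_{k=1}^{t-1} (1-η)^{t-1-k} r_k`, the covariance
`⟨s_t, r_t⟩ = γ ∑_{k=1}^{t-1} (1-η)^{t-1-k} C k t` converges, as `t → ∞`, to
`γ β₀² (1-λ)/(1 − (1-η)(1-λ))`, where `β₀² = β²/(λ(2-λ))`. -/
theorem signal_return_covariance_stationary_limit
    (β lam η γ : ℝ) (hβ : 0 < β) (hγ : 0 < γ)
    (hlam0 : 0 < lam) (hlam1 : lam < 1) (hη0 : 0 < η) (hη1 : η < 1)
    (β₀ : ℝ) (hβ₀ : β₀ = β / Real.sqrt (lam * (2 - lam)))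
    (C : ℕ → ℕ → ℝ)
    (hC : ∀ j k : ℕ, 1 ≤ j → 1 ≤ k →
      C j k = (if j = k then 1 else 0)
        + β₀ ^ 2 * ((1 - lam) ^ ((j : ℤ) - (k : ℤ)).natAbs - (1 - lam) ^ (j + k - 2))) :
    Tendsto (fun t : ℕ => γ * ∑ k ∈ Finset.Ico 1 t, (1 - η) ^ (t - 1 - k) * C k t)
      atTop (nhds (γ * β₀ ^ 2 * (1 - lam) / (1 - (1 - η) * (1 - lam)))) := by
  set a : ℝ := 1 - η with ha
  set b : ℝ := 1 - lam with hb
  have ha0 : 0 < a := by simp [ha]; linarith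
  have ha1 : a < 1 := by simp [ha]; linarith
  have hb0 : 0 < b := by simp [hb]; linarith
  have hb1 : b < 1 := by simp [hb]; linarith
  have hab0 : 0 ≤ a * b := by positivity
  have hab1 : a * b < 1 := by nlinarith
  have hone : (0:ℝ) < 1 - a * b := by linarith
  -- rewrite the summand
  have key : ∀ t : ℕ,
      γ * ∑ k ∈ Finset.Ico 1 t, (1 - η) ^ (t - 1 - k) * C k t
      = γ * β₀ ^ 2 * (b * ∑ j ∈ Finset.range (t - 1), (a * b) ^ j)
        - γ * β₀ ^ 2 * ∑ k ∈ Finset.Ico 1 t, a ^ (t - 1 - k) * b ^ (k + t - 2) := by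
    intro t
    have hsum1 : ∑ k ∈ Finset.Ico 1 t, (1 - η) ^ (t - 1 - k) * C k t
        = ∑ k ∈ Finset.Ico 1 t,
            (β₀ ^ 2 * (a ^ (t - 1 - k) * b ^ (t - k))
              - β₀ ^ 2 * (a ^ (t - 1 - k) * b ^ (k + t - 2))) := by
      apply Finset.sum_congr rfl
      intro k hk
      simp only [Finset.mem_Ico] at hk
      have hkt : k ≠ t := by omega
      have h1t : 1 ≤ t := by omega
      rw [hC k t hk.1 h1t]
      have habs : ((k : ℤ) - (t : ℤ)).natAbs = t - k := by omega
      rw [habs, if_neg hkt]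
      ring
    rw [hsum1, Finset.sum_sub_distrib, ← Finset.mul_sum, ← Finset.mul_sum]
    have hre : ∑ k ∈ Finset.Ico 1 t, a ^ (t - 1 - k) * b ^ (t - k)
        = b * ∑ j ∈ Finset.range (t - 1), (a * b) ^ j := by
      rw [Finset.sum_Ico_eq_sum_range]
      have : ∀ j ∈ Finset.range (t - 1),
          a ^ (t - 1 - (1 + j)) * b ^ (t - (1 + j))
          = (fun i => b * (a * b) ^ i) (t - 1 - 1 - j) := by
        intro j hj
        simp only [Finset.mem_range] at hj
        have e1 : t - 1 - (1 + j) = t - 1 - 1 - j := by omega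
        have e2 : t - (1 + j) = (t - 1 - 1 - j) + 1 := by omega
        simp only [e1, e2, mul_pow]
        ring
      rw [Finset.sum_congr rfl this, Finset.sum_range_reflect (fun i => b * (a * b) ^ i) (t - 1)]
      rw [Finset.mul_sum]
    rw [hre]
    ring
  refine Tendsto.congr (fun t => (key t).symm) ?_
  -- the limit
  have hgeom : Tendsto (fun t : ℕ => γ * β₀ ^ 2 * (b * ∑ j ∈ Finset.range (t - 1), (a * b) ^ j))
      atTop (nhds (γ * β₀ ^ 2 * (b * (1 - a * b)⁻¹))) := by
    apply Tendsto.const_mul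
    apply Tendsto.const_mul
    exact (hasSum_geometric_of_lt_one hab0 hab1).tendsto_sum_nat.comp (tendsto_sub_atTop_nat 1)
  have hrem : Tendsto (fun t : ℕ => ∑ k ∈ Finset.Ico 1 t, a ^ (t - 1 - k) * b ^ (k + t - 2))
      atTop (nhds 0) := by
    have hup : Tendsto (fun t : ℕ => ((t - 1 : ℕ) : ℝ) * b ^ (t - 1)) atTop (nhds 0) := by
      have hs : Summable (fun n : ℕ => (n : ℝ) * b ^ n) := by
        have := summable_pow_mul_geometric_of_norm_lt_one 1
          (r := b) (by rw [Real.norm_eq_abs, abs_of_pos hb0]; exact hb1)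
        simpa using this
      exact hs.tendsto_atTop_zero.comp (tendsto_sub_atTop_nat 1)
    apply squeeze_zero (fun t => ?_) (fun t => ?_) hup
    · exact Finset.sum_nonneg fun k _ => by positivity
    · calc ∑ k ∈ Finset.Ico 1 t, a ^ (t - 1 - k) * b ^ (k + t - 2)
          ≤ ∑ _k ∈ Finset.Ico 1 t, b ^ (t - 1) := by
            apply Finset.sum_le_sum
            intro k hk
            simp only [Finset.mem_Ico] at hk
            have h1 : a ^ (t - 1 - k) ≤ 1 := pow_le_one₀ ha0.le ha1.le
            have h2 : b ^ (k + t - 2) ≤ b ^ (t - 1) :=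
              pow_le_pow_of_le_one hb0.le hb1.le (by omega)
            calc a ^ (t - 1 - k) * b ^ (k + t - 2) ≤ 1 * b ^ (t - 1) := by
                  apply mul_le_mul h1 h2 (by positivity) (by norm_num)
              _ = b ^ (t - 1) := by ring
        _ = ((t - 1 : ℕ) : ℝ) * b ^ (t - 1) := by
            rw [Finset.sum_const, Nat.card_Ico, nsmul_eq_mul]
  have hrem' : Tendsto (fun t : ℕ =>
      γ * β₀ ^ 2 * ∑ k ∈ Finset.Ico 1 t, a ^ (t - 1 - k) * b ^ (k + t - 2))
      atTop (nhds (γ * β₀ ^ 2 * 0)) := hrem.const_mul _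
  have := hgeom.sub hrem'
  convert this using 2
  have hne : 1 - a * b ≠ 0 := ne_of_gt hone
  field_simp
  ring
end

section
/- The theoretical Sharpe ratio function S(η) = (β₀²√(2η) − (2/π)θ√η(λ+η)) / √((λ+η)² + 2β₀²(λ+η)), in the frictionless case θ = 0, attains its maximum over η > 0 at η_opt = λ√(1 + 2β₀²/λ), for any λ > 0 and β₀ > 0. -/
/-- In the frictionless case `θ = 0`, the theoretical Sharpe ratio
`S(η) = β₀²√(2η)/√((λ+η)² + 2β₀²(λ+η))` attains its maximum over `η > 0` at
`η_opt = λ√(1 + 2β₀²/λ)`, for any `λ > 0` and `β₀ > 0`. -/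
theorem sharpe_maximized_at_eta_opt
    (lam β₀ : ℝ) (hlam : 0 < lam) (hβ₀ : 0 < β₀)
    (S : ℝ → ℝ)
    (hS : ∀ η, S η = β₀ ^ 2 * Real.sqrt (2 * η) /
      Real.sqrt ((lam + η) ^ 2 + 2 * β₀ ^ 2 * (lam + η)))
    (ηopt : ℝ) (hηopt : ηopt = lam * Real.sqrt (1 + 2 * β₀ ^ 2 / lam)) :
    ∀ η : ℝ, 0 < η → S η ≤ S ηopt := by
  intro η hη
  have harg : (0:ℝ) ≤ 1 + 2 * β₀ ^ 2 / lam := by positivity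
  have hopt_pos : 0 < ηopt := by
    rw [hηopt]
    exact mul_pos hlam (Real.sqrt_pos.mpr (by positivity))
  have hsq : ηopt ^ 2 = lam ^ 2 + 2 * β₀ ^ 2 * lam := by
    rw [hηopt, mul_pow, Real.sq_sqrt harg]
    field_simp
  have hD : 0 < (lam + η) ^ 2 + 2 * β₀ ^ 2 * (lam + η) := by
    have : 0 < lam + η := by linarith
    positivity
  have hDopt : 0 < (lam + ηopt) ^ 2 + 2 * β₀ ^ 2 * (lam + ηopt) := by
    have : 0 < lam + ηopt := by linarith
    positivity
  have key : (2 * η) * ((lam + ηopt) ^ 2 + 2 * β₀ ^ 2 * (lam + ηopt)) ≤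
      (2 * ηopt) * ((lam + η) ^ 2 + 2 * β₀ ^ 2 * (lam + η)) := by
    nlinarith [mul_nonneg hopt_pos.le (sq_nonneg (η - ηopt)), hsq]
  rw [hS, hS]
  rw [div_le_div_iff₀ (Real.sqrt_pos.mpr hD) (Real.sqrt_pos.mpr hDopt)]
  have h1 : Real.sqrt (2 * η) * Real.sqrt ((lam + ηopt) ^ 2 + 2 * β₀ ^ 2 * (lam + ηopt)) ≤
      Real.sqrt (2 * ηopt) * Real.sqrt ((lam + η) ^ 2 + 2 * β₀ ^ 2 * (lam + η)) := by
    rw [← Real.sqrt_mul (by positivity), ← Real.sqrt_mul (by positivity)]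
    exact Real.sqrt_le_sqrt key
  calc β₀ ^ 2 * Real.sqrt (2 * η) * Real.sqrt ((lam + ηopt) ^ 2 + 2 * β₀ ^ 2 * (lam + ηopt))
      = β₀ ^ 2 * (Real.sqrt (2 * η) * Real.sqrt ((lam + ηopt) ^ 2 + 2 * β₀ ^ 2 * (lam + ηopt))) := by ring
    _ ≤ β₀ ^ 2 * (Real.sqrt (2 * ηopt) * Real.sqrt ((lam + η) ^ 2 + 2 * β₀ ^ 2 * (lam + η))) := by
        exact mul_le_mul_of_nonneg_left h1 (by positivity)
    _ = β₀ ^ 2 * Real.sqrt (2 * ηopt) * Real.sqrt ((lam + η) ^ 2 + 2 * β₀ ^ 2 * (lam + η)) := by ring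
end
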